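/- Let K be an algebraically closed field and F = K(x). Let S be a K-subspace of F with dim_K S = n, K(S) = F, and combinatorial genus γ with 2 ≤ γ ≤ n − 3. Let (e_1, …, e_n) be a filtered basis of S with respect to v_∞ with e_1 = 1, with combinatorial genii γ_i of the natural filtration. Suppose {γ_i : 1 ≤ i ≤ n} = {0, γ}, and that the least index t with γ_t = γ satisfies t ≥ γ + 3. Then deg(e_i) = i − 1 for all 1 ≤ i ≤ t − 1, and Δ := deg(e_t) − (t − 2) satisfies 1 ≤ Δ ≤ γ + 1. -/

import Mathlib

/-!
If some `e_j`, `j ≥ 2`, were not in `K(S_j)`, then `S_j²` and `e_j S_j` would meet trivially and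
`e_j²` would have a new degree, so `dim S_{j+1}² ≥ dim S_j² + j + 1`: the genus would jump by
`j - 1 ≥ 1`, which the hypotheses on the genii allow only if `t ≤ j + 1 ≤ γ + 2`. Hence
`K(x) = K(S) = K(e₁)`, and `deg e₁ = 1` by `[K(x) : K(f)] = max (deg num f) (deg denom f)`.
Inductively, once `deg e_k = k` for `k < i`, the nonzero elements of `S_{i+1}²` realise at least
`#(A + A) ≥ min (3i) (deg e_i + i + 1)` distinct degrees, `A = {0, …, i - 1, deg e_i}`, and there
are at most `dim S_{i+1}² = γ_{i+1} + 2i + 1` of them: this gives `deg e_i = i` while `γ_{i+1} = 0`,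
and `Δ ≤ γ + 1` at `i + 1 = t`.
-/

open Polynomial

noncomputable section

namespace FFF

variable {K : Type*} [Field K] [IsAlgClosed K]

/-- Valuation of a rational function at the finite place `x - α`
(order of vanishing at `x - α`). -/
def vA (α : K) (f : RatFunc K) : ℤ :=
  (Polynomial.rootMultiplicity α f.num : ℤ) - (Polynomial.rootMultiplicity α f.denom : ℤ)

/-- Valuation of a rational function at the place at infinity:
`deg (denominator) - deg (numerator)`. -/
def vInf (f : RatFunc K) : ℤ := -f.intDegree

/-- The places of `K(x)`: `some α` is the finite place at `α ∈ K`, `none` is the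
place at infinity; `plval p` is the associated valuation. -/
def plval (p : Option K) (f : RatFunc K) : ℤ :=
  Option.elim p (vInf f) (fun α => vA α f)

/-- The degree of a rational function, `deg f = -v∞(f)`. -/
def fdeg (f : RatFunc K) : ℤ := f.intDegree

/-- A divisor on `K(x)`: an integer for every place, zero for all but finitely many. -/
abbrev Divisor (K : Type*) [Field K] := Option K →₀ ℤ

/-- The degree of a divisor: the sum of its values. -/
def divDeg (D : Divisor K) : ℤ := D.sum fun _ n => n

/-- The Riemann–Roch space `L(D)` of a divisor `D`. -/
def RRset (D : Divisor K) : Set (RatFunc K) :=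
  {f | f = 0 ∨ ∀ p : Option K, -(D p) ≤ plval p f}

/-- The subfield `K(T)` of `K(x)` generated by the constants `K` and a set `T`. -/
def Kgen (T : Set (RatFunc K)) : Subfield (RatFunc K) :=
  Subfield.closure ((Set.range fun a : K => (RatFunc.C a : RatFunc K)) ∪ T)

/-- The combinatorial genus `γ = dim S² - 2 dim S + 1` of a subspace `S`. -/
def cgenus (S : Submodule K (RatFunc K)) : ℤ :=
  (Module.finrank K ↥(S * S) : ℤ) - 2 * (Module.finrank K ↥S : ℤ) + 1

/-- `sfil e i` is the `i`-th step (1-indexed) of the natural filtration attached to a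
filtered basis `e`: the span of the first `i` basis vectors. -/
def sfil {n : ℕ} (e : Fin n → RatFunc K) (i : ℕ) : Submodule K (RatFunc K) :=
  Submodule.span K (e '' {j | (j : ℕ) < i})

/-- `e` is a filtered basis of `S` with respect to the valuation `v`:
a basis of `S` with strictly decreasing valuations. -/
def IsFilteredBasis {n : ℕ} (v : RatFunc K → ℤ) (S : Submodule K (RatFunc K))
    (e : Fin n → RatFunc K) : Prop :=
  LinearIndependent K e ∧ Submodule.span K (Set.range e) = S ∧
    StrictAnti fun i => v (e i)

/-- `D` is the divisor of least degree with `S ⊆ L(D)`, i.e.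
`D(P) = -min {v_P s : s ∈ S, s ≠ 0}` for every place `P`. -/
def IsMinDivisor (S : Submodule K (RatFunc K)) (D : Divisor K) : Prop :=
  ∀ p : Option K, IsLeast {d : ℤ | ∃ s ∈ S, s ≠ 0 ∧ plval p s = d} (-(D p))

end FFF

namespace FFF

open Pointwise

variable {K : Type*} [Field K]

lemma fdeg_mul {f g : RatFunc K} (hf : f ≠ 0) (hg : g ≠ 0) : fdeg (f * g) = fdeg f + fdeg g :=
  RatFunc.intDegree_mul hf hg

lemma fdeg_smul {c : K} (hc : c ≠ 0) (f : RatFunc K) : fdeg (c • f) = fdeg f := by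
  by_cases hf : f = 0
  · simp [hf]
  · rw [RatFunc.smul_eq_C_mul, fdeg_mul (by simpa using hc) hf, fdeg, RatFunc.intDegree_C,
      zero_add]

/-- The Riemann–Roch space `L(c · P∞)`. -/
def degLE (c : ℤ) : Submodule K (RatFunc K) where
  carrier := {f | f = 0 ∨ fdeg f ≤ c}
  zero_mem' := Or.inl rfl
  add_mem' {f g} hf hg := by
    by_cases hg0 : g = 0
    · simpa [hg0] using hf
    by_cases hf0 : f = 0
    · simpa [hf0] using hg
    by_cases hfg : f + g = 0
    · exact Or.inl hfg
    exact Or.inr <| (RatFunc.intDegree_add_le hg0 hfg).trans <|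
      max_le (hf.resolve_left hf0) (hg.resolve_left hg0)
  smul_mem' a f hf := by
    by_cases ha : a = 0
    · simp [ha]
    rcases hf with hf | hf
    · simp [hf]
    · exact Or.inr ((fdeg_smul ha f).trans_le hf)

lemma mem_degLE_of_ne_zero {c : ℤ} {f : RatFunc K} (hf : f ≠ 0) :
    f ∈ degLE c ↔ fdeg f ≤ c :=
  or_iff_right hf

lemma mem_degLE_of_fdeg_le {c : ℤ} {f : RatFunc K} (hf : fdeg f ≤ c) : f ∈ degLE c :=
  Or.inr hf

lemma degLE_mono {a b : ℤ} (hab : a ≤ b) : degLE (K := K) a ≤ degLE b :=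
  fun _ hf => hf.imp_right (·.trans hab)

lemma degLE_mul_degLE (a b : ℤ) : degLE (K := K) a * degLE b ≤ degLE (a + b) := by
  refine Submodule.mul_le.mpr fun f hf g hg => ?_
  by_cases hf0 : f = 0
  · simp [hf0]
  by_cases hg0 : g = 0
  · simp [hg0]
  rw [mem_degLE_of_ne_zero hf0] at hf
  rw [mem_degLE_of_ne_zero hg0] at hg
  exact mem_degLE_of_fdeg_le ((fdeg_mul hf0 hg0).trans_le (add_le_add hf hg))

def degSet (V : Submodule K (RatFunc K)) : Set ℤ :=
  {d | ∃ f ∈ V, f ≠ 0 ∧ fdeg f = d}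

lemma degSet_add_degSet_subset (V W : Submodule K (RatFunc K)) :
    degSet V + degSet W ⊆ degSet (V * W) := by
  rintro _ ⟨_, ⟨f, hf, hf0, rfl⟩, _, ⟨g, hg, hg0, rfl⟩, rfl⟩
  exact ⟨f * g, Submodule.mul_mem_mul hf hg, mul_ne_zero hf0 hg0, fdeg_mul hf0 hg0⟩

theorem card_le_finrank_of_subset_degSet (V : Submodule K (RatFunc K)) [FiniteDimensional K V]
    (Z : Finset ℤ) (hZ : (Z : Set ℤ) ⊆ degSet V) : Z.card ≤ Module.finrank K V := by
  classical
  induction Z using Finset.induction_on_max generalizing V with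
  | empty => simp
  | insert a Z hlt ih =>
    obtain ⟨f, hfV, hf0, rfl⟩ := hZ (Finset.mem_insert_self _ _)
    have hZ' : (Z : Set ℤ) ⊆ degSet (V ⊓ degLE (fdeg f - 1)) := by
      intro z hz
      obtain ⟨g, hgV, hg0, rfl⟩ := hZ (Finset.mem_insert_of_mem hz)
      exact ⟨g, ⟨hgV, mem_degLE_of_fdeg_le (by linarith [hlt _ hz])⟩, hg0, rfl⟩
    have hlt_V : V ⊓ degLE (fdeg f - 1) < V :=
      lt_of_le_of_ne inf_le_left fun h => by
        have := (mem_degLE_of_ne_zero hf0).mp (h.ge hfV).2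
        omega
    rw [Finset.card_insert_of_notMem fun h => (hlt _ h).false]
    exact Nat.succ_le_of_lt <|
      (ih _ hZ').trans_lt (Submodule.finrank_lt_finrank_of_lt hlt_V)

instance finiteDimensional_mul (V W : Submodule K (RatFunc K)) [FiniteDimensional K V]
    [FiniteDimensional K W] : FiniteDimensional K ↥(V * W) :=
  Module.Finite.iff_fg.mpr <|
    (Module.Finite.iff_fg.mp inferInstance).mul (Module.Finite.iff_fg.mp inferInstance)

/-- `V²` and `hV` meet trivially because `h ∉ K(V)`, and `h²` has a degree above everything in
`V² + hV`. -/
theorem finrank_mul_self_sup_span_ge (V : Submodule K (RatFunc K)) [FiniteDimensional K V]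
    {h : RatFunc K} (hV : V ≤ degLE (fdeg h - 1))
    (hh : h ∉ IntermediateField.adjoin K (V : Set (RatFunc K))) :
    Module.finrank K ↥(V * V) + Module.finrank K V + 1 ≤
      Module.finrank K ↥((V ⊔ K ∙ h) * (V ⊔ K ∙ h)) := by
  set E := IntermediateField.adjoin K (V : Set (RatFunc K))
  have hh0 : h ≠ 0 := fun h0 => hh (h0 ▸ E.zero_mem)
  set B := V.map (LinearMap.mulLeft K h)
  have hB : Module.finrank K B = Module.finrank K V :=
    (Submodule.equivMapOfInjective _ (mul_right_injective₀ hh0) V).finrank_eq.symm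
  have hVV_E : V * V ≤ Subalgebra.toSubmodule E.toSubalgebra :=
    Submodule.mul_le.mpr fun f hf g hg =>
      E.mul_mem (IntermediateField.subset_adjoin K _ hf) (IntermediateField.subset_adjoin K _ hg)
  have hdisj : V * V ⊓ B = ⊥ := by
    refine (Submodule.eq_bot_iff _).mpr ?_
    rintro _ ⟨hx, b, hb, rfl⟩
    by_contra hb0
    have hb0 : b ≠ 0 := fun h0 => hb0 (by simp [h0])
    refine hh ?_
    have : h = h * b * b⁻¹ := by field_simp
    rw [this]
    exact E.mul_mem (hVV_E hx) (E.inv_mem (IntermediateField.subset_adjoin K _ hb))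
  have hlow : V * V ⊔ B ≤ degLE (2 * fdeg h - 1) := by
    refine sup_le ((mul_le_mul' hV hV).trans ((degLE_mul_degLE _ _).trans
      (degLE_mono (by omega)))) ?_
    rintro _ ⟨b, hb, rfl⟩
    have := degLE_mul_degLE (fdeg h) (fdeg h - 1)
      (Submodule.mul_mem_mul (mem_degLE_of_fdeg_le le_rfl) (hV hb))
    exact degLE_mono (by omega) this
  have hsq : h * h ∉ degLE (K := K) (2 * fdeg h - 1) := by
    rw [mem_degLE_of_ne_zero (mul_ne_zero hh0 hh0), fdeg_mul hh0 hh0]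
    omega
  have hhW : h ∈ V ⊔ K ∙ h := Submodule.mem_sup_right (Submodule.mem_span_singleton_self h)
  have hVW : V ≤ V ⊔ K ∙ h := le_sup_left
  have hlt : V * V ⊔ B < (V ⊔ K ∙ h) * (V ⊔ K ∙ h) := by
    refine lt_of_le_of_ne (sup_le (mul_le_mul' hVW hVW) ?_) fun heq => hsq ?_
    · rintro _ ⟨b, hb, rfl⟩
      exact Submodule.mul_mem_mul hhW (hVW hb)
    · exact hlow (heq ▸ Submodule.mul_mem_mul hhW hhW)
  have hsup := Submodule.finrank_sup_add_finrank_inf_eq (V * V) B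
  rw [hdisj, finrank_bot, hB, add_zero] at hsup
  have := Submodule.finrank_lt_finrank_of_lt hlt
  omega

theorem min_le_card_add_self_insert_Ico {m D : ℤ} (hmD : m ≤ D) :
    min (3 * m) (D + m + 1) ≤ (insert D (Finset.Ico 0 m) + insert D (Finset.Ico 0 m)).card := by
  set A := insert D (Finset.Ico 0 m)
  have hsub :
      Finset.Ico 0 (2 * m - 1) ∪ Finset.Ico (max D (2 * m - 1)) (D + m) ∪ {2 * D} ⊆ A + A := by
    intro x hx
    simp only [Finset.mem_union, Finset.mem_Ico, Finset.mem_singleton] at hx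
    rw [Finset.mem_add]
    rcases hx with (hx | hx) | rfl
    · exact ⟨min x (m - 1), by simp [A]; omega, x - min x (m - 1), by simp [A]; omega, by ring⟩
    · exact ⟨D, by simp [A], x - D, by simp [A]; omega, by ring⟩
    · exact ⟨D, by simp [A], D, by simp [A], by ring⟩
  have := Finset.card_le_card hsub
  rw [Finset.card_union_of_disjoint, Finset.card_union_of_disjoint, Int.card_Ico, Int.card_Ico,
    Finset.card_singleton] at this
  · omega
  · exact Finset.disjoint_left.mpr fun x hx hx' => by simp at hx hx'; omega
  · exact Finset.disjoint_left.mpr fun x hx hx' => by simp at hx hx'; omega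

theorem fdeg_eq_one_of_adjoin_eq_top {f : RatFunc K} (hf : 0 < fdeg f)
    (htop : IntermediateField.adjoin K {f} = ⊤) : fdeg f = 1 := by
  have hmax := RatFunc.finrank_eq_max_natDegree f
  rw [htop, IntermediateField.finrank_top] at hmax
  unfold fdeg RatFunc.intDegree at hf ⊢
  omega

section FilteredBasis

variable {n : ℕ} (e : Fin n → RatFunc K)

lemma mem_sfil {i : ℕ} {j : Fin n} (h : (j : ℕ) < i) : e j ∈ sfil e i :=
  Submodule.subset_span ⟨j, h, rfl⟩

instance finiteDimensional_sfil (i : ℕ) : FiniteDimensional K (sfil e i) :=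
  FiniteDimensional.span_of_finite K ((Set.toFinite _).image e)

lemma finrank_sfil (hli : LinearIndependent K e) {i : ℕ} (hi : i ≤ n) :
    Module.finrank K (sfil e i) = i := by
  have himg : e '' {j | (j : ℕ) < i} = Set.range (e ∘ Fin.castLE hi) := by
    ext x
    constructor
    · rintro ⟨j, hj, rfl⟩
      exact ⟨⟨j, hj⟩, rfl⟩
    · rintro ⟨k, rfl⟩
      exact ⟨Fin.castLE hi k, k.2, rfl⟩
  rw [sfil, himg, finrank_span_eq_card (hli.comp _ (Fin.castLE_injective hi)), Fintype.card_fin]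

lemma finrank_sfil_mul_self (hli : LinearIndependent K e) {i : ℕ} (hi : i ≤ n) :
    (Module.finrank K ↥(sfil e i * sfil e i) : ℤ) = cgenus (sfil e i) + 2 * i - 1 := by
  rw [cgenus, finrank_sfil e hli hi]
  ring

lemma sfil_succ (i : Fin n) : sfil e (i + 1) = sfil e i ⊔ K ∙ e i := by
  have : {j : Fin n | (j : ℕ) < i + 1} = insert i {j : Fin n | (j : ℕ) < i} := by
    ext j
    simp only [Set.mem_insert_iff, Set.mem_ofPred_eq, Fin.ext_iff]
    omega
  rw [sfil, this, Set.image_insert_eq, Submodule.span_insert, sup_comm, sfil]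

variable {e}

lemma sfil_le_degLE (hmono : StrictMono fun j => fdeg (e j)) (i : Fin n) :
    sfil e i ≤ degLE (fdeg (e i) - 1) := by
  rw [sfil, Submodule.span_le]
  rintro _ ⟨j, hj, rfl⟩
  have : fdeg (e j) < fdeg (e i) := hmono (show j < i from hj)
  exact mem_degLE_of_fdeg_le (by omega)

theorem cgenus_sfil_succ_ge (hli : LinearIndependent K e) (hmono : StrictMono fun j => fdeg (e j))
    (i : Fin n) (hi : e i ∉ IntermediateField.adjoin K (sfil e i : Set (RatFunc K))) :
    cgenus (sfil e i) + i - 1 ≤ cgenus (sfil e (i + 1)) := by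
  have := finrank_mul_self_sup_span_ge _ (sfil_le_degLE hmono i) hi
  rw [← sfil_succ, finrank_sfil e hli i.2.le] at this
  unfold cgenus
  rw [finrank_sfil e hli i.2.le, finrank_sfil e hli i.2]
  push_cast
  omega

theorem mem_of_forall_mem_adjoin_sfil {E : IntermediateField K (RatFunc K)} {k : ℕ}
    (hlow : ∀ j : Fin n, (j : ℕ) < k → e j ∈ E)
    (hhigh : ∀ j : Fin n, k ≤ j → e j ∈ IntermediateField.adjoin K (sfil e j : Set (RatFunc K)))
    (j : Fin n) : e j ∈ E := by
  induction j using WellFoundedLT.induction with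
  | ind j ih =>
    rcases lt_or_ge (j : ℕ) k with hjk | hjk
    · exact hlow j hjk
    have hsfil : sfil e j ≤ Subalgebra.toSubmodule E.toSubalgebra :=
      Submodule.span_le.mpr <| by
        rintro _ ⟨i, hi, rfl⟩
        exact ih i hi
    exact IntermediateField.adjoin_le_iff.mpr hsfil (hhigh j hjk)

lemma le_fdeg_of_forall_fdeg_eq (hmono : StrictMono fun j => fdeg (e j)) {i : Fin n}
    (hi : 0 < (i : ℕ)) (hAP : ∀ j < i, fdeg (e j) = j) : (i : ℤ) ≤ fdeg (e i) := by
  have hlt : (⟨i - 1, by omega⟩ : Fin n) < i := Fin.lt_def.mpr (by simp; omega)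
  have : fdeg (e ⟨i - 1, _⟩) < fdeg (e i) := hmono hlt
  rw [hAP _ hlt] at this
  dsimp only at this
  omega

/-- The left side bounds `#(A + A)` for the degrees `A = {0, …, i - 1, deg e_i}` of `S_{i+1}`. -/
theorem min_le_finrank_sfil_mul_self (hli : LinearIndependent K e)
    (hmono : StrictMono fun j => fdeg (e j)) {i : Fin n} (hi : 0 < (i : ℕ))
    (hAP : ∀ j < i, fdeg (e j) = j) :
    min (3 * (i : ℤ)) (fdeg (e i) + i + 1) ≤
      Module.finrank K ↥(sfil e (i + 1) * sfil e (i + 1)) := by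
  classical
  set A := insert (fdeg (e i)) (Finset.Ico 0 (i : ℤ))
  have hA : (A : Set ℤ) ⊆ degSet (sfil e (i + 1)) := by
    intro z hz
    simp only [A, Finset.coe_insert, Finset.coe_Ico, Set.mem_insert_iff, Set.mem_Ico] at hz
    rcases hz with rfl | ⟨hz0, hzi⟩
    · exact ⟨e i, mem_sfil e (Nat.lt_succ_self _), hli.ne_zero i, rfl⟩
    · have hj : z.toNat < n := by omega
      refine ⟨e ⟨z.toNat, hj⟩, mem_sfil e (by dsimp only; omega), hli.ne_zero _, ?_⟩
      rw [hAP _ (Fin.lt_def.mpr (by dsimp only; omega))]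
      dsimp only
      omega
  have hAA : ((A + A : Finset ℤ) : Set ℤ) ⊆ degSet (sfil e (i + 1) * sfil e (i + 1)) := by
    rw [Finset.coe_add]
    exact (Set.add_subset_add hA hA).trans (degSet_add_degSet_subset _ _)
  calc min (3 * (i : ℤ)) (fdeg (e i) + i + 1) ≤ (A + A).card :=
        min_le_card_add_self_insert_Ico (le_fdeg_of_forall_fdeg_eq hmono hi hAP)
    _ ≤ _ := by exact_mod_cast card_le_finrank_of_subset_degSet _ _ hAA

theorem mem_adjoin_sfil_of_cgenus (hli : LinearIndependent K e)
    (hmono : StrictMono fun j => fdeg (e j)) {γ : ℤ} {t : ℕ} (hγ0 : 0 ≤ γ) (ht : γ + 3 ≤ t)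
    (hγ : ∀ i, 1 ≤ i → i ≤ n → cgenus (sfil e i) = 0 ∨ cgenus (sfil e i) = γ)
    (hleast : ∀ i, 1 ≤ i → i ≤ n → cgenus (sfil e i) = γ → t ≤ i)
    (j : Fin n) (hj : 2 ≤ (j : ℕ)) :
    e j ∈ IntermediateField.adjoin K (sfil e j : Set (RatFunc K)) := by
  by_contra hnot
  have hjump := cgenus_sfil_succ_ge hli hmono j hnot
  rcases hγ j (by omega) j.2.le with h0 | h0 <;> rcases hγ (j + 1) (by omega) j.2 with h1 | h1
  · omega
  · have := hleast (j + 1) (by omega) j.2 h1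
    omega
  all_goals omega

theorem fdeg_eq_of_cgenus_eq_zero (hli : LinearIndependent K e)
    (hmono : StrictMono fun j => fdeg (e j)) {t : ℕ}
    (hlow : ∀ j : Fin n, (j : ℕ) < 2 → fdeg (e j) = j)
    (hzero : ∀ i, 1 ≤ i → i < t → cgenus (sfil e i) = 0) :
    ∀ j : Fin n, (j : ℕ) + 1 < t → fdeg (e j) = j := by
  intro j
  induction j using WellFoundedLT.induction with
  | ind j ih =>
    intro hjt
    rcases lt_or_ge (j : ℕ) 2 with hj | hj
    · exact hlow j hj
    have hAP : ∀ k < j, fdeg (e k) = k := fun k hk => ih k hk (by omega)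
    have hmin := min_le_finrank_sfil_mul_self hli hmono (by omega) hAP
    have hle := le_fdeg_of_forall_fdeg_eq hmono (by omega) hAP
    rw [finrank_sfil_mul_self e hli (i := j + 1) j.2, hzero (j + 1) (by omega) hjt] at hmin
    push_cast at hmin
    omega

end FilteredBasis

lemma Kgen_eq_top_iff {T : Set (RatFunc K)} :
    Kgen T = ⊤ ↔ IntermediateField.adjoin K T = ⊤ := by
  rw [← IntermediateField.toSubfield_inj, IntermediateField.top_toSubfield,
    IntermediateField.adjoin_toSubfield, RatFunc.algebraMap_eq_C]
  rfl

/-- Every `e_j` lies in `K(e₁)`, so `K(e₁) = K(x)`. -/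
theorem fdeg_eq_one_of_forall_mem_adjoin_sfil {n : ℕ} {e : Fin n → RatFunc K}
    {S : Submodule K (RatFunc K)} (hspan : Submodule.span K (Set.range e) = S)
    (htop : IntermediateField.adjoin K (S : Set (RatFunc K)) = ⊤)
    (hmono : StrictMono fun j => fdeg (e j)) (he1 : ∀ j : Fin n, (j : ℕ) = 0 → e j = 1)
    (hchain : ∀ j : Fin n, 2 ≤ (j : ℕ) →
      e j ∈ IntermediateField.adjoin K (sfil e j : Set (RatFunc K)))
    (i : Fin n) (hi : (i : ℕ) = 1) : fdeg (e i) = 1 := by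
  have hlt : (⟨0, by omega⟩ : Fin n) < i := Fin.lt_def.mpr (by simp [hi])
  have hpos : fdeg (e ⟨0, _⟩) < fdeg (e i) := hmono hlt
  rw [he1 _ rfl, fdeg, RatFunc.intDegree_one] at hpos
  refine fdeg_eq_one_of_adjoin_eq_top hpos (top_le_iff.mp (htop ▸ ?_))
  have hmem : ∀ j, e j ∈ IntermediateField.adjoin K {e i} := by
    refine mem_of_forall_mem_adjoin_sfil (k := 2) (fun j hj => ?_) hchain
    rcases (by omega : (j : ℕ) = 0 ∨ j = i) with h | rfl
    · rw [he1 j h]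
      exact IntermediateField.one_mem _
    · exact IntermediateField.mem_adjoin_simple_self K _
  have hS : S ≤ Subalgebra.toSubmodule (IntermediateField.adjoin K {e i}).toSubalgebra :=
    hspan ▸ Submodule.span_le.mpr (Set.range_subset_iff.mpr hmem)
  exact IntermediateField.adjoin_le_iff.mpr hS

variable [IsAlgClosed K]

theorem statement11_general (n : ℕ) (S : Submodule K (RatFunc K))
    (hgen : Kgen (S : Set (RatFunc K)) = ⊤)
    (hg2 : 2 ≤ cgenus S)
    (e : Fin n → RatFunc K)
    (hbasis : IsFilteredBasis vInf S e)
    (he1 : ∀ j : Fin n, (j : ℕ) = 0 → e j = 1)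
    (hrange : {z : ℤ | ∃ i : ℕ, 1 ≤ i ∧ i ≤ n ∧ z = cgenus (sfil e i)} = {0, cgenus S})
    (t : ℕ)
    (ht : IsLeast {i : ℕ | 1 ≤ i ∧ i ≤ n ∧ cgenus (sfil e i) = cgenus S} t)
    (htg : cgenus S + 3 ≤ (t : ℤ)) :
    (∀ j : Fin n, (j : ℕ) + 1 < t → fdeg (e j) = (j : ℕ)) ∧
    ∀ j : Fin n, (j : ℕ) + 1 = t →
      1 ≤ fdeg (e j) - ((t : ℤ) - 2) ∧ fdeg (e j) - ((t : ℤ) - 2) ≤ cgenus S + 1 := by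
  obtain ⟨hli, hspan, hanti⟩ := hbasis
  obtain ⟨⟨-, htn, htγ⟩, htleast⟩ := ht
  have hmono : StrictMono fun j => fdeg (e j) := fun i j hij => neg_lt_neg_iff.mp (hanti hij)
  have hγ : ∀ i, 1 ≤ i → i ≤ n → cgenus (sfil e i) = 0 ∨ cgenus (sfil e i) = cgenus S :=
    fun i h1 h2 => hrange.le ⟨i, h1, h2, rfl⟩
  have hzero : ∀ i, 1 ≤ i → i < t → cgenus (sfil e i) = 0 := fun i h1 h2 =>
    (hγ i h1 (by omega)).resolve_right fun h => (htleast ⟨h1, by omega, h⟩).not_gt h2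
  have hchain := mem_adjoin_sfil_of_cgenus hli hmono (by omega) htg hγ
    fun i h1 h2 h => htleast ⟨h1, h2, h⟩
  have hdeg01 : ∀ j : Fin n, (j : ℕ) < 2 → fdeg (e j) = j := fun j hj => by
    rcases (by omega : (j : ℕ) = 0 ∨ (j : ℕ) = 1) with h | h
    · rw [he1 j h, fdeg, RatFunc.intDegree_one, h, Nat.cast_zero]
    · rw [h, Nat.cast_one]
      exact fdeg_eq_one_of_forall_mem_adjoin_sfil hspan (Kgen_eq_top_iff.mp hgen) hmono he1
        hchain j h
  have hAP := fdeg_eq_of_cgenus_eq_zero hli hmono hdeg01 hzero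
  refine ⟨hAP, fun j hj => ?_⟩
  have hAP' : ∀ k < j, fdeg (e k) = k := fun k hk => hAP k (by omega)
  have hmin := min_le_finrank_sfil_mul_self hli hmono (by omega) hAP'
  have hle := le_fdeg_of_forall_fdeg_eq hmono (by omega) hAP'
  rw [finrank_sfil_mul_self e hli (i := j + 1) j.2, hj, htγ] at hmin
  omega

/-- Case `{γ_i} = {0, γ}`, `t ≥ γ + 3`: then `deg e_i = i - 1` for
`1 ≤ i ≤ t - 1` (here Fin-indexed: `deg (e j) = j` for `j + 1 < t`), and
`Δ := deg e_t - (t - 2)` satisfies `1 ≤ Δ ≤ γ + 1`. -/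
theorem statement11 (n : ℕ) (S : Submodule K (RatFunc K))
    (hdim : Module.finrank K ↥S = n)
    (hgen : Kgen (S : Set (RatFunc K)) = ⊤)
    (hg2 : 2 ≤ cgenus S) (hgn : cgenus S ≤ (n : ℤ) - 3)
    (e : Fin n → RatFunc K)
    (hbasis : IsFilteredBasis vInf S e)
    (he1 : ∀ j : Fin n, (j : ℕ) = 0 → e j = 1)
    (hrange : {z : ℤ | ∃ i : ℕ, 1 ≤ i ∧ i ≤ n ∧ z = cgenus (sfil e i)} = {0, cgenus S})
    (t : ℕ)
    (ht : IsLeast {i : ℕ | 1 ≤ i ∧ i ≤ n ∧ cgenus (sfil e i) = cgenus S} t)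
    (htg : cgenus S + 3 ≤ (t : ℤ)) :
    (∀ j : Fin n, (j : ℕ) + 1 < t → fdeg (e j) = (j : ℕ)) ∧
    ∀ j : Fin n, (j : ℕ) + 1 = t →
      1 ≤ fdeg (e j) - ((t : ℤ) - 2) ∧ fdeg (e j) - ((t : ℤ) - 2) ≤ cgenus S + 1 :=
  statement11_general n S hgen hg2 e hbasis he1 hrange t ht htg

end FFF
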